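/- arXiv:2108.01345 — 3 statements merged into one kernel-verified Lean document; each statement's English description precedes it below -/
import Mathlib

section
/- Assume (A1). The following three conditions are equivalent: (1) the set {n ∈ ℤ : a_n = 0} has at least two elements; (2) the unitary operator 𝒰 on ℓ²(ℤ;ℂ²) has an eigenvalue, i.e. there exist λ ∈ ℂ and a nonzero ψ ∈ ℓ²(ℤ;ℂ²) with 𝒰ψ = λψ; (3) the matrix 𝒦 has an eigenvalue of absolute value 1. -/
/-!
Away from `[0, n₀]` the walk is free: a solution of `𝒰ψ = μψ` satisfies
`ψ(n)_L = μ ψ(n-1)_L` and `ψ(n)_R = μ ψ(n+1)_R` there. Since `𝒰` is unitary an `ℓ²` eigenvalue has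
`|μ| = 1`, so both components have constant modulus along each tail and an `ℓ²` eigenvector is
supported in `[0, n₀]`; there it is exactly an eigenvector of `𝒦`. Conversely an eigenvector of `𝒦`
with `|μ| = 1`, extended by zero, solves the eigenvalue equation on `[0, n₀]`, and conservation
of the norm forces it outside as well.

If `s ≤ t` are the ends of the support of a finitely supported eigenvector, the equations at
`s - 1, s` and `t, t + 1` give `a_s = 0` and `d_t = 0`, hence `a_t = 0` since `|a| = |d|` for a
unitary `2 × 2` matrix, and `s ≠ t`. Conversely, if `a_n = a_m = 0` with `n < m`, the
finite-dimensional space of states supported in `[n, m]` with no `R`-component at `n` and no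
`L`-component at `m` is `𝒰`-invariant, so it contains an eigenvector.
-/

open Complex Matrix

noncomputable section

/-- states: `ℂ²` -/
abbrev C2 : Type := Fin 2 → ℂ

/-- `P n = |L⟩⟨L| U n` -/
def Pmat (U : ℤ → Matrix (Fin 2) (Fin 2) ℂ) (n : ℤ) : Matrix (Fin 2) (Fin 2) ℂ :=
  Matrix.of fun i j => if i = 0 then U n 0 j else 0

/-- `Q n = |R⟩⟨R| U n` -/
def Qmat (U : ℤ → Matrix (Fin 2) (Fin 2) ℂ) (n : ℤ) : Matrix (Fin 2) (Fin 2) ℂ :=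
  Matrix.of fun i j => if i = 1 then U n 1 j else 0

/-- the time evolution operator `𝒰`: `(𝒰ψ)(n) = P_{n+1}ψ(n+1) + Q_{n-1}ψ(n-1)` -/
def QWop (U : ℤ → Matrix (Fin 2) (Fin 2) ℂ) (ψ : ℤ → C2) : ℤ → C2 :=
  fun n => (Pmat U (n + 1)).mulVec (ψ (n + 1)) + (Qmat U (n - 1)).mulVec (ψ (n - 1))

/-- all local coins are unitary -/
def CoinsUnitary (U : ℤ → Matrix (Fin 2) (Fin 2) ℂ) : Prop :=
  ∀ n : ℤ, U n ∈ Matrix.unitaryGroup (Fin 2) ℂ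

/-- Assumption (A1): `U n = I₂` outside `[n₀] = {0,…,n₀}` -/
def A1 (n0 : ℕ) (U : ℤ → Matrix (Fin 2) (Fin 2) ℂ) : Prop :=
  ∀ n : ℤ, n < 0 ∨ (n0 : ℤ) < n → U n = 1

/-- Assumption (A2): `a n ≠ 0` for all `n` -/
def A2 (U : ℤ → Matrix (Fin 2) (Fin 2) ℂ) : Prop :=
  ∀ n : ℤ, U n 0 0 ≠ 0

/-- the restriction `𝒦` of `𝒰` to `ℓ²([n₀];ℂ²) ≅ ℂ^{2(n₀+1)}`, as a matrix:
`(𝒦v)(n) = P_{n+1}v(n+1) + Q_{n-1}v(n-1)` with the convention that out-of-range terms vanish. -/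
def Kmat (n0 : ℕ) (U : ℤ → Matrix (Fin 2) (Fin 2) ℂ) :
    Matrix (Fin (n0 + 1) × Fin 2) (Fin (n0 + 1) × Fin 2) ℂ :=
  Matrix.of fun p q =>
    (if p.2 = 0 ∧ (q.1 : ℕ) = (p.1 : ℕ) + 1 then U (((p.1 : ℕ) : ℤ) + 1) 0 q.2 else 0) +
    (if p.2 = 1 ∧ (q.1 : ℕ) + 1 = (p.1 : ℕ) then U ((q.1 : ℕ) : ℤ) 1 q.2 else 0)

/-- `μ` is an eigenvalue of `𝒦` -/
def HasEig (n0 : ℕ) (U : ℤ → Matrix (Fin 2) (Fin 2) ℂ) (μ : ℂ) : Prop :=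
  ∃ v : Fin (n0 + 1) × Fin 2 → ℂ, v ≠ 0 ∧ (Kmat n0 U).mulVec v = μ • v

/-- the algebraic multiplicity of `μ` as an eigenvalue of `𝒦`:
`dim ker (𝒦 - μI)^{2(n₀+1)}` -/
def algMult (n0 : ℕ) (U : ℤ → Matrix (Fin 2) (Fin 2) ℂ) (μ : ℂ) : ℕ :=
  Module.finrank ℂ
    (LinearMap.ker (Matrix.mulVecLin ((Kmat n0 U - μ • 1) ^ (2 * (n0 + 1)))))

/-- `ψ` solves the generalized eigenvalue equation `𝒰ψ = μψ` (pointwise on `ℤ`) -/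
def IsSol (U : ℤ → Matrix (Fin 2) (Fin 2) ℂ) (μ : ℂ) (ψ : ℤ → C2) : Prop :=
  ∀ n : ℤ, QWop U ψ n = μ • ψ n

/-- the local transfer matrix `T n ξ` -/
def Tmat (U : ℤ → Matrix (Fin 2) (Fin 2) ℂ) (ξ : ℂ) (n : ℤ) : Matrix (Fin 2) (Fin 2) ℂ :=
  !![Complex.exp (Complex.I * ξ) / (starRingEnd ℂ) (U n 0 0),
      -((starRingEnd ℂ) (U n 1 0)) / (starRingEnd ℂ) (U n 0 0);
    -(U n 1 0) / U n 1 1, Complex.exp (-(Complex.I * ξ)) / U n 1 1]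

/-- the global transfer matrix `𝕋(ξ) = T₀(ξ)T₁(ξ)⋯T_{n₀}(ξ)` -/
def TT (n0 : ℕ) (U : ℤ → Matrix (Fin 2) (Fin 2) ℂ) (ξ : ℂ) : Matrix (Fin 2) (Fin 2) ℂ :=
  ((List.range (n0 + 1)).map fun k => Tmat U ξ (k : ℤ)).prod

/-- the Wronskian-type determinant `𝒲_n(ψ₁,ψ₂) = det(Π_nψ₁, Π_nψ₂)` where
`Π_nψ = (⟨L|ψ(n)⟩, ⟨R|ψ(n+1)⟩)ᵀ` -/
def Wr (ψ₁ ψ₂ : ℤ → C2) (n : ℤ) : ℂ :=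
  ψ₁ n 0 * ψ₂ (n + 1) 1 - ψ₂ n 0 * ψ₁ (n + 1) 1

/-- outgoing state -/
def Outgoing (n0 : ℕ) (ψ : ℤ → C2) : Prop :=
  ∀ n : ℕ, ψ (-(n : ℤ)) 1 = 0 ∧ ψ ((n0 : ℤ) + n) 0 = 0

/-- member of `ℋ^out_N` -/
def OutgoingFrom (n0 : ℕ) (N : ℕ) (ψ : ℤ → C2) : Prop :=
  ∀ n : ℕ, N ≤ n → ψ (-(n : ℤ)) 1 = 0 ∧ ψ ((n0 : ℤ) + n) 0 = 0

/-- incoming state -/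
def Incoming (n0 : ℕ) (φ : ℤ → C2) : Prop :=
  ∀ n : ℕ, φ (-(n : ℤ)) 0 = 0 ∧ φ ((n0 : ℤ) + n) 1 = 0

/-- the pairing `⟨φ, ψ⟩ = Σ_{n∈ℤ} (φ(n), ψ(n))_{ℂ²}` -/
def pairing (φ ψ : ℤ → C2) : ℂ :=
  ∑' n : ℤ, ∑ i : Fin 2, (starRingEnd ℂ) (φ n i) * ψ n i

/-- restriction of a state to `[n₀]` -/
def resK (n0 : ℕ) (ψ : ℤ → C2) : Fin (n0 + 1) × Fin 2 → ℂ :=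
  fun p => ψ ((p.1 : ℕ) : ℤ) p.2

/-- the Jost solution `ψ_out^-(·;ξ)`: solution equal to `e^{-inξ}|L⟩` for `n ≤ -1` -/
def JostOutMinus (U : ℤ → Matrix (Fin 2) (Fin 2) ℂ) (ξ : ℂ) (ψ : ℤ → C2) : Prop :=
  IsSol U (Complex.exp (-(Complex.I * ξ))) ψ ∧
    ∀ n : ℤ, n ≤ -1 → ψ n = ![Complex.exp (-(Complex.I * (n : ℂ) * ξ)), 0]

/-- the Jost solution `ψ_out^+(·;ξ)`: solution equal to `e^{inξ}|R⟩` for `n ≥ n₀+1` -/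
def JostOutPlus (n0 : ℕ) (U : ℤ → Matrix (Fin 2) (Fin 2) ℂ) (ξ : ℂ) (ψ : ℤ → C2) : Prop :=
  IsSol U (Complex.exp (-(Complex.I * ξ))) ψ ∧
    ∀ n : ℤ, (n0 : ℤ) + 1 ≤ n → ψ n = ![0, Complex.exp (Complex.I * (n : ℂ) * ξ)]

/-- the Jost solution `ψ_in^-(·;ξ)`: solution equal to `e^{inξ}|R⟩` for `n ≤ -1` -/
def JostInMinus (U : ℤ → Matrix (Fin 2) (Fin 2) ℂ) (ξ : ℂ) (ψ : ℤ → C2) : Prop :=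
  IsSol U (Complex.exp (-(Complex.I * ξ))) ψ ∧
    ∀ n : ℤ, n ≤ -1 → ψ n = ![0, Complex.exp (Complex.I * (n : ℂ) * ξ)]

/-- the Jost solution `ψ_in^+(·;ξ)`: solution equal to `e^{-inξ}|L⟩` for `n ≥ n₀+1` -/
def JostInPlus (n0 : ℕ) (U : ℤ → Matrix (Fin 2) (Fin 2) ℂ) (ξ : ℂ) (ψ : ℤ → C2) : Prop :=
  IsSol U (Complex.exp (-(Complex.I * ξ))) ψ ∧
    ∀ n : ℤ, (n0 : ℤ) + 1 ≤ n → ψ n = ![Complex.exp (-(Complex.I * (n : ℂ) * ξ)), 0]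

theorem sum_norm_sq_mulVec_of_mem_unitaryGroup {ι : Type*} [Fintype ι] [DecidableEq ι]
    {V : Matrix ι ι ℂ} (hV : V ∈ unitaryGroup ι ℂ) (x : ι → ℂ) :
    ∑ i, ‖(V *ᵥ x) i‖ ^ 2 = ∑ i, ‖x i‖ ^ 2 := by
  have hsum (y : ι → ℂ) : ((∑ i, ‖y i‖ ^ 2 : ℝ) : ℂ) = star y ⬝ᵥ y := by
    simp [dotProduct, ← Complex.conj_mul']
  have hstar : star (V *ᵥ x) ⬝ᵥ (V *ᵥ x) = star x ⬝ᵥ x := by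
    rw [star_mulVec, dotProduct_mulVec, vecMul_vecMul, ← star_eq_conjTranspose,
      mem_unitaryGroup_iff'.mp hV, vecMul_one]
  exact_mod_cast (hsum _).trans (hstar.trans (hsum x).symm)

theorem norm_apply_zero_zero_eq_norm_apply_one_one {V : Matrix (Fin 2) (Fin 2) ℂ}
    (hV : V ∈ unitaryGroup (Fin 2) ℂ) : ‖V 0 0‖ = ‖V 1 1‖ := by
  have hrow := congrFun (congrFun (mem_unitaryGroup_iff.mp hV) 0) 0
  have hcol := congrFun (congrFun (mem_unitaryGroup_iff'.mp hV) 1) 1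
  simp only [mul_apply, star_apply, Fin.sum_univ_two, one_apply_eq, RCLike.star_def,
    Complex.mul_conj', Complex.conj_mul'] at hrow hcol
  have : ‖V 0 0‖ ^ 2 = ‖V 1 1‖ ^ 2 := by
    exact_mod_cast (by linear_combination hrow - hcol : (‖V 0 0‖ : ℂ) ^ 2 = ‖V 1 1‖ ^ 2)
  exact (sq_eq_sq₀ (norm_nonneg _) (norm_nonneg _)).mp this

theorem sum_norm_sq_eq_zero_iff {ι E : Type*} [Fintype ι] [NormedAddCommGroup E] {x : ι → E} :
    ∑ i, ‖x i‖ ^ 2 = 0 ↔ x = 0 := by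
  rw [Finset.sum_eq_zero_iff_of_nonneg (fun i _ => by positivity), funext_iff]
  simp

theorem eq_zero_of_summable_sq_of_norm_succ {E : Type*} [NormedAddCommGroup E] {x : ℕ → E}
    (hx : Summable fun j => ‖x j‖ ^ 2) (h : ∀ j, ‖x (j + 1)‖ = ‖x j‖) : x 0 = 0 := by
  have hconst : ∀ j, ‖x j‖ = ‖x 0‖ := fun j => by
    induction j with
    | zero => rfl
    | succ j ih => rw [h, ih]
  simp only [hconst, summable_const_iff] at hx
  simpa using hx

theorem eq_zero_of_summable_sq_of_norm_add_one {E : Type*} [NormedAddCommGroup E] {x : ℤ → E}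
    (hx : Summable fun n => ‖x n‖ ^ 2) {k : ℤ} (h : ∀ n, k ≤ n → ‖x (n + 1)‖ = ‖x n‖) :
    x k = 0 := by
  have hinj : Function.Injective fun j : ℕ => k + j := fun a b hab => by simpa using hab
  have := eq_zero_of_summable_sq_of_norm_succ (x := fun j : ℕ => x (k + j))
    (hx.comp_injective hinj) (fun j => by simpa [add_assoc] using h (k + j) (by omega))
  simpa using this

theorem eq_zero_of_summable_sq_of_norm_sub_one {E : Type*} [NormedAddCommGroup E] {x : ℤ → E}
    (hx : Summable fun n => ‖x n‖ ^ 2) {k : ℤ} (h : ∀ n, n ≤ k → ‖x (n - 1)‖ = ‖x n‖) :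
    x k = 0 := by
  have := eq_zero_of_summable_sq_of_norm_add_one (x := fun n => x (-n)) (k := -k)
    (hx.comp_injective neg_injective)
    (fun n hn => by simpa [neg_add_eq_sub] using h (-n) (by omega))
  simpa using this

section Walk

variable {U : ℤ → Matrix (Fin 2) (Fin 2) ℂ} {μ : ℂ} {ψ : ℤ → C2}

theorem QWop_apply_zero (U : ℤ → Matrix (Fin 2) (Fin 2) ℂ) (ψ : ℤ → C2) (n : ℤ) :
    QWop U ψ n 0 = (U (n + 1) *ᵥ ψ (n + 1)) 0 := by
  simp [QWop, Pmat, Qmat, mulVec, dotProduct]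

theorem QWop_apply_one (U : ℤ → Matrix (Fin 2) (Fin 2) ℂ) (ψ : ℤ → C2) (n : ℤ) :
    QWop U ψ n 1 = (U (n - 1) *ᵥ ψ (n - 1)) 1 := by
  simp [QWop, Pmat, Qmat, mulVec, dotProduct]

theorem IsSol.mulVec_apply_zero (h : IsSol U μ ψ) (k : ℤ) :
    (U k *ᵥ ψ k) 0 = μ * ψ (k - 1) 0 := by
  simpa [QWop_apply_zero] using congrFun (h (k - 1)) 0

theorem IsSol.mulVec_apply_one (h : IsSol U μ ψ) (k : ℤ) :
    (U k *ᵥ ψ k) 1 = μ * ψ (k + 1) 1 := by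
  simpa [QWop_apply_one] using congrFun (h (k + 1)) 1

theorem hasSum_norm_sq_QWop (hU : CoinsUnitary U)
    (hψ : Summable fun n => ∑ i, ‖ψ n i‖ ^ 2) :
    HasSum (fun n => ∑ i, ‖QWop U ψ n i‖ ^ 2) (∑' n, ∑ i, ‖ψ n i‖ ^ 2) := by
  set A : ℤ → ℝ := fun n => ‖(U n *ᵥ ψ n) 0‖ ^ 2
  set B : ℤ → ℝ := fun n => ‖(U n *ᵥ ψ n) 1‖ ^ 2
  have hQ (n : ℤ) : ∑ i, ‖QWop U ψ n i‖ ^ 2 = A (n + 1) + B (n - 1) := by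
    rw [Fin.sum_univ_two, QWop_apply_zero, QWop_apply_one]
  have hAB (n : ℤ) : A n + B n = ∑ i, ‖ψ n i‖ ^ 2 := by
    rw [← sum_norm_sq_mulVec_of_mem_unitaryGroup (hU n), Fin.sum_univ_two]
  have hA : Summable A := hψ.of_nonneg_of_le (fun _ => by positivity)
    (fun n => by rw [← hAB n]; exact le_add_of_nonneg_right (by positivity))
  have hB : Summable B := hψ.of_nonneg_of_le (fun _ => by positivity)
    (fun n => by rw [← hAB n]; exact le_add_of_nonneg_left (by positivity))
  clear_value A B
  have hA' : HasSum (fun n => A (n + 1)) (∑' n, A n) :=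
    (Equiv.addRight (1 : ℤ)).hasSum_iff.mpr hA.hasSum
  have hB' : HasSum (fun n => B (n - 1)) (∑' n, B n) :=
    (Equiv.subRight (1 : ℤ)).hasSum_iff.mpr hB.hasSum
  rw [funext hQ, ← tsum_congr hAB, hA.tsum_add hB]
  exact hA'.add hB'

theorem sum_norm_sq_smul {ι : Type*} [Fintype ι] (μ : ℂ) (x : ι → ℂ) :
    ∑ i, ‖(μ • x) i‖ ^ 2 = ‖μ‖ ^ 2 * ∑ i, ‖x i‖ ^ 2 := by
  simp [mul_pow, Finset.mul_sum]

theorem IsSol.norm_eq_one (hU : CoinsUnitary U) (hψ0 : ψ ≠ 0)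
    (hψ : Summable fun n => ∑ i, ‖ψ n i‖ ^ 2) (h : IsSol U μ ψ) : ‖μ‖ = 1 := by
  obtain ⟨n, hn⟩ := Function.ne_iff.mp hψ0
  have hpos : 0 < ∑' n, ∑ i, ‖ψ n i‖ ^ 2 :=
    hψ.tsum_pos (fun _ => by positivity) n
      (lt_of_le_of_ne (by positivity) (Ne.symm (sum_norm_sq_eq_zero_iff.not.mpr hn)))
  have hscaled := (hψ.hasSum.mul_left (‖μ‖ ^ 2)).unique <| by
    simpa only [h _, sum_norm_sq_smul] using hasSum_norm_sq_QWop hU hψ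
  have hsq : ‖μ‖ ^ 2 = 1 := mul_right_cancel₀ hpos.ne' (hscaled.trans (one_mul _).symm)
  exact (pow_eq_one_iff_of_nonneg (norm_nonneg μ) two_ne_zero).mp hsq

theorem IsSol.apply_zero_of_coin_eq_one (h : IsSol U μ ψ) {k : ℤ} (hk : U k = 1) :
    ψ k 0 = μ * ψ (k - 1) 0 := by
  simpa [hk] using h.mulVec_apply_zero k

theorem IsSol.apply_one_of_coin_eq_one (h : IsSol U μ ψ) {k : ℤ} (hk : U k = 1) :
    ψ k 1 = μ * ψ (k + 1) 1 := by
  simpa [hk] using h.mulVec_apply_one k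

theorem IsSol.support_subset_Icc {n0 : ℕ} (hU : CoinsUnitary U) (hA1 : A1 n0 U) (hψ0 : ψ ≠ 0)
    (hψ : Summable fun n => ∑ i, ‖ψ n i‖ ^ 2) (h : IsSol U μ ψ) :
    Function.support ψ ⊆ Set.Icc 0 (n0 : ℤ) := by
  have hμ := h.norm_eq_one hU hψ0 hψ
  have hcomp (i : Fin 2) : Summable fun n => ‖ψ n i‖ ^ 2 :=
    hψ.of_nonneg_of_le (fun _ => by positivity) fun n =>
      Finset.single_le_sum (f := fun i => ‖ψ n i‖ ^ 2) (fun _ _ => by positivity)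
        (Finset.mem_univ i)
  have hfree0 {k : ℤ} (hk : k < 0 ∨ (n0 : ℤ) < k) : ‖ψ k 0‖ = ‖ψ (k - 1) 0‖ := by
    rw [h.apply_zero_of_coin_eq_one (hA1 k hk), norm_mul, hμ, one_mul]
  have hfree1 {k : ℤ} (hk : k < 0 ∨ (n0 : ℤ) < k) : ‖ψ k 1‖ = ‖ψ (k + 1) 1‖ := by
    rw [h.apply_one_of_coin_eq_one (hA1 k hk), norm_mul, hμ, one_mul]
  rw [Function.support_subset_iff']
  intro k hk
  rw [Set.mem_Icc, not_and_or, not_le, not_le] at hk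
  ext i
  fin_cases i
  all_goals rcases hk with hk | hk
  · refine eq_zero_of_summable_sq_of_norm_sub_one (hcomp 0) fun n hn => ?_
    exact (hfree0 (Or.inl (by omega))).symm
  · refine eq_zero_of_summable_sq_of_norm_add_one (hcomp 0) fun n hn => ?_
    simpa using hfree0 (k := n + 1) (Or.inr (by omega))
  · refine eq_zero_of_summable_sq_of_norm_sub_one (hcomp 1) fun n hn => ?_
    simpa using hfree1 (k := n - 1) (Or.inl (by omega))
  · refine eq_zero_of_summable_sq_of_norm_add_one (hcomp 1) fun n hn => ?_
    exact (hfree1 (Or.inr (by omega))).symm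

end Walk

theorem sum_fin_ite_eq_of_support_subset {M : Type*} [AddCommMonoid M] {n0 : ℕ} {g : ℤ → M}
    (hg : Function.support g ⊆ Set.Icc 0 (n0 : ℤ)) (m : ℤ) :
    ∑ k : Fin (n0 + 1), (if ((k : ℕ) : ℤ) = m then g k else 0) = g m := by
  rw [Fin.sum_univ_eq_sum_range (fun k : ℕ => if (k : ℤ) = m then g k else 0)]
  by_cases hm : m ∈ Set.Icc 0 (n0 : ℤ)
  · lift m to ℕ using hm.1
    simp only [Nat.cast_inj, Finset.sum_ite_eq', Finset.mem_range]
    rw [if_pos (by simp at hm; omega)]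
  · rw [Function.notMem_support.mp fun h => hm (hg h)]
    refine Finset.sum_eq_zero fun k hk => if_neg ?_
    rintro rfl
    exact hm ⟨by positivity, by simp at hk; omega⟩

theorem Kmat_mulVec_resK {n0 : ℕ} {U : ℤ → Matrix (Fin 2) (Fin 2) ℂ} {ψ : ℤ → C2}
    (hψ : Function.support ψ ⊆ Set.Icc 0 (n0 : ℤ)) :
    Kmat n0 U *ᵥ resK n0 ψ = resK n0 (QWop U ψ) := by
  ext ⟨j, i⟩
  have hsupp (i : Fin 2) : Function.support (fun m => (U m *ᵥ ψ m) i) ⊆ Set.Icc 0 (n0 : ℤ) :=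
    fun m hm => hψ fun h => hm (by simp [h])
  rw [mulVec, dotProduct, Fintype.sum_prod_type]
  obtain rfl | rfl : i = 0 ∨ i = 1 := by fin_cases i <;> simp
  · rw [resK, QWop_apply_zero, ← sum_fin_ite_eq_of_support_subset (hsupp 0)]
    refine Finset.sum_congr rfl fun k _ => ?_
    by_cases hk : (k : ℕ) = j + 1
    · simp [Kmat, resK, hk, mulVec, dotProduct]
    · have hk' : ((k : ℕ) : ℤ) ≠ j + 1 := by omega
      simp [Kmat, hk, hk']
  · rw [resK, QWop_apply_one, ← sum_fin_ite_eq_of_support_subset (hsupp 1)]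
    refine Finset.sum_congr rfl fun k _ => ?_
    by_cases hk : (k : ℕ) + 1 = j
    · have hk' : ((k : ℕ) : ℤ) = j - 1 := by omega
      simp [Kmat, resK, hk, hk', mulVec, dotProduct]
    · have hk' : ((k : ℕ) : ℤ) ≠ j - 1 := by omega
      simp [Kmat, hk, hk']

def extK (n0 : ℕ) (v : Fin (n0 + 1) × Fin 2 → ℂ) : ℤ → C2 :=
  fun n => if h : 0 ≤ n ∧ n ≤ n0 then fun i => v (⟨n.toNat, by omega⟩, i) else 0

section Restriction

variable {n0 : ℕ}

theorem resK_extK (v : Fin (n0 + 1) × Fin 2 → ℂ) : resK n0 (extK n0 v) = v := by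
  ext ⟨j, i⟩
  simp [resK, extK, j.is_le]

theorem support_extK_subset (v : Fin (n0 + 1) × Fin 2 → ℂ) :
    Function.support (extK n0 v) ⊆ Set.Icc 0 (n0 : ℤ) :=
  Function.support_subset_iff'.mpr fun _ hn => dif_neg hn

theorem extK_resK {ψ : ℤ → C2} (hψ : Function.support ψ ⊆ Set.Icc 0 (n0 : ℤ)) :
    extK n0 (resK n0 ψ) = ψ := by
  ext n i
  by_cases hn : 0 ≤ n ∧ n ≤ n0
  · simp [extK, resK, hn]
  · simp [extK, hn, Function.support_subset_iff'.mp hψ n hn]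

end Restriction

theorem summable_sum_norm_sq_of_finite_support {ψ : ℤ → C2} (hψ : (Function.support ψ).Finite) :
    Summable fun n => ∑ i, ‖ψ n i‖ ^ 2 :=
  summable_of_hasFiniteSupport <| hψ.subset fun _ hn h => hn (by simp [h])

section Eigenvalues

variable {U : ℤ → Matrix (Fin 2) (Fin 2) ℂ} {μ : ℂ} {ψ : ℤ → C2}

-- The norm is conserved and already accounted for on `S`, so nothing can leave `S`.
theorem isSol_of_eqOn (hU : CoinsUnitary U) (hμ : ‖μ‖ = 1)
    (hψ : Summable fun n => ∑ i, ‖ψ n i‖ ^ 2) {S : Set ℤ} (hS : Function.support ψ ⊆ S)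
    (h : ∀ n ∈ S, QWop U ψ n = μ • ψ n) : IsSol U μ ψ := by
  have hout (n : ℤ) (hn : n ∉ S) : ψ n = 0 := Function.support_subset_iff'.mp hS n hn
  have hle (n : ℤ) : ∑ i, ‖ψ n i‖ ^ 2 ≤ ∑ i, ‖QWop U ψ n i‖ ^ 2 := by
    by_cases hn : n ∈ S
    · rw [h n hn, sum_norm_sq_smul, hμ, one_pow, one_mul]
    · simp [hout n hn]
      positivity
  have heq (n : ℤ) : ∑ i, ‖QWop U ψ n i‖ ^ 2 = ∑ i, ‖ψ n i‖ ^ 2 := by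
    by_contra hne
    exact (hasSum_lt hle (lt_of_le_of_ne (hle n) (Ne.symm hne)) hψ.hasSum
      (hasSum_norm_sq_QWop hU hψ)).false
  intro n
  by_cases hn : n ∈ S
  · exact h n hn
  · rw [hout n hn, smul_zero]
    exact sum_norm_sq_eq_zero_iff.mp ((heq n).trans (by simp [hout n hn]))

theorem isSol_extK {n0 : ℕ} (hU : CoinsUnitary U) (hμ : ‖μ‖ = 1) {v : Fin (n0 + 1) × Fin 2 → ℂ}
    (hv : Kmat n0 U *ᵥ v = μ • v) : IsSol U μ (extK n0 v) := by
  have hsupp := support_extK_subset v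
  refine isSol_of_eqOn hU hμ
    (summable_sum_norm_sq_of_finite_support ((Set.finite_Icc _ _).subset hsupp)) hsupp
    fun n hn => ?_
  have hres : resK n0 (QWop U (extK n0 v)) = resK n0 (μ • extK n0 v) := by
    rw [← Kmat_mulVec_resK hsupp, resK_extK, hv]
    exact congrArg (μ • ·) (resK_extK v).symm
  lift n to ℕ using hn.1
  ext i
  simpa [resK] using congrFun hres (⟨n, by simp at hn; omega⟩, i)

theorem IsSol.hasEig {n0 : ℕ} (hU : CoinsUnitary U) (hA1 : A1 n0 U) (hψ0 : ψ ≠ 0)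
    (hψ : Summable fun n => ∑ i, ‖ψ n i‖ ^ 2) (h : IsSol U μ ψ) : HasEig n0 U μ := by
  have hsupp := h.support_subset_Icc hU hA1 hψ0 hψ
  refine ⟨resK n0 ψ, fun h0 => hψ0 ?_, ?_⟩
  · rw [← extK_resK hsupp, h0]
    ext n i
    simp only [extK]
    split_ifs <;> rfl
  · rw [Kmat_mulVec_resK hsupp, funext h]
    rfl

end Eigenvalues

def QWlin (U : ℤ → Matrix (Fin 2) (Fin 2) ℂ) : (ℤ → C2) →ₗ[ℂ] (ℤ → C2) where
  toFun := QWop U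
  map_add' ψ φ := by
    ext n i
    simp only [QWop, Pi.add_apply, mulVec_add]
    ring
  map_smul' c ψ := by
    ext n i
    simp only [QWop, Pi.smul_apply, mulVec_smul, RingHom.id_apply, Pi.add_apply, smul_eq_mul]
    ring

def trapSpace (n m : ℤ) : Submodule ℂ (ℤ → C2) where
  carrier := {ψ | Function.support ψ ⊆ Set.Icc n m ∧ ψ n 1 = 0 ∧ ψ m 0 = 0}
  add_mem' := by
    rintro ψ φ ⟨hψ, hψn, hψm⟩ ⟨hφ, hφn, hφm⟩
    exact ⟨(Function.support_add ψ φ).trans (Set.union_subset hψ hφ), by simp [hψn, hφn],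
      by simp [hψm, hφm]⟩
  zero_mem' := by simp
  smul_mem' := by
    rintro c ψ ⟨hψ, hψn, hψm⟩
    exact ⟨(Function.support_const_smul_subset c ψ).trans hψ, by simp [hψn], by simp [hψm]⟩

section Trapped

variable {U : ℤ → Matrix (Fin 2) (Fin 2) ℂ} {n m : ℤ}

theorem QWop_mem_trapSpace (han : U n 0 0 = 0) (hdm : U m 1 1 = 0) {ψ : ℤ → C2}
    (hψ : ψ ∈ trapSpace n m) : QWop U ψ ∈ trapSpace n m := by
  obtain ⟨hsupp, hn, hm⟩ := hψ
  have hout (k : ℤ) (hk : k < n ∨ m < k) : ψ k = 0 :=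
    Function.support_subset_iff'.mp hsupp k fun h => by simp only [Set.mem_Icc] at h; omega
  have h0 (k : ℤ) (hk : k ≤ n ∨ m < k) : (U k *ᵥ ψ k) 0 = 0 := by
    obtain rfl | hk := eq_or_ne k n
    · simp [mulVec, dotProduct, han, hn]
    · simp [hout k (by omega)]
  have h1 (k : ℤ) (hk : k < n ∨ m ≤ k) : (U k *ᵥ ψ k) 1 = 0 := by
    obtain rfl | hk := eq_or_ne k m
    · simp [mulVec, dotProduct, hdm, hm]
    · simp [hout k (by omega)]
  refine ⟨Function.support_subset_iff'.mpr fun k hk => ?_, ?_, ?_⟩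
  · simp only [Set.mem_Icc, not_and_or, not_le] at hk
    ext i
    fin_cases i
    · exact (QWop_apply_zero U ψ k).trans (h0 _ (by omega))
    · exact (QWop_apply_one U ψ k).trans (h1 _ (by omega))
  · exact (QWop_apply_one U ψ n).trans (h1 _ (by omega))
  · exact (QWop_apply_zero U ψ m).trans (h0 _ (by omega))

instance (n m : ℤ) : FiniteDimensional ℂ (trapSpace n m) := by
  refine FiniteDimensional.of_injective
    (LinearMap.funLeft ℂ C2 (Subtype.val : Set.Icc n m → ℤ) ∘ₗ (trapSpace n m).subtype)
    fun ψ φ h => Subtype.ext (funext fun k => ?_)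
  by_cases hk : k ∈ Set.Icc n m
  · exact congrFun h ⟨k, hk⟩
  · rw [Function.support_subset_iff'.mp ψ.2.1 k hk, Function.support_subset_iff'.mp φ.2.1 k hk]

theorem trapSpace_nontrivial (hnm : n < m) : Nontrivial (trapSpace n m) := by
  refine Submodule.nontrivial_iff_ne_bot.mpr ((Submodule.ne_bot_iff _).mpr
    ⟨Pi.single n (Pi.single 0 1), ⟨?_, by simp, by simp [hnm.ne']⟩, by simp⟩)
  exact Function.support_subset_iff'.mpr fun k hk =>
    Pi.single_eq_of_ne (by rintro rfl; exact hk (Set.left_mem_Icc.mpr hnm.le)) _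

theorem exists_isSol_of_coin_eq_zero (hnm : n < m) (han : U n 0 0 = 0) (hdm : U m 1 1 = 0) :
    ∃ (μ : ℂ) (ψ : ℤ → C2), ψ ≠ 0 ∧ Function.support ψ ⊆ Set.Icc n m ∧ IsSol U μ ψ := by
  have := trapSpace_nontrivial hnm
  obtain ⟨μ, hμ⟩ := Module.End.exists_eigenvalue
    ((QWlin U).restrict fun _ => QWop_mem_trapSpace (U := U) han hdm)
  obtain ⟨ψ, hψ⟩ := hμ.exists_hasEigenvector
  exact ⟨μ, ψ, fun h => hψ.2 (Subtype.ext h), ψ.2.1,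
    fun k => congrFun (congrArg Subtype.val hψ.apply_eq_smul) k⟩

end Trapped

theorem IsSol.exists_coin_eq_zero {U : ℤ → Matrix (Fin 2) (Fin 2) ℂ} {μ : ℂ} {ψ : ℤ → C2}
    (hU : CoinsUnitary U) (hμ : μ ≠ 0) (hψ0 : ψ ≠ 0) (hfin : (Function.support ψ).Finite)
    (h : IsSol U μ ψ) : ∃ n m : ℤ, n ≠ m ∧ U n 0 0 = 0 ∧ U m 0 0 = 0 := by
  have hne : hfin.toFinset.Nonempty := by
    simpa [Function.support_eq_empty_iff, Set.nonempty_iff_ne_empty] using hψ0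
  set s := hfin.toFinset.min' hne
  set t := hfin.toFinset.max' hne
  have hs : ψ s ≠ 0 := by simpa [s] using hfin.toFinset.min'_mem hne
  have ht : ψ t ≠ 0 := by simpa [t] using hfin.toFinset.max'_mem hne
  have hlt : ψ (s - 1) = 0 := by
    by_contra hψs
    exact absurd (hfin.toFinset.min'_le _ (by simpa using hψs)) (by omega)
  have hgt : ψ (t + 1) = 0 := by
    by_contra hψt
    exact absurd (hfin.toFinset.le_max' _ (by simpa using hψt)) (by omega)
  have hs1 : ψ s 1 = 0 := by
    simpa [hlt, hμ] using (h.mulVec_apply_one (s - 1)).symm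
  have ht0 : ψ t 0 = 0 := by
    simpa [hgt, hμ] using (h.mulVec_apply_zero (t + 1)).symm
  have hs0 : ψ s 0 ≠ 0 := fun h0 => hs (funext fun i => by fin_cases i <;> assumption)
  have ht1 : ψ t 1 ≠ 0 := fun h1 => ht (funext fun i => by fin_cases i <;> assumption)
  have has : U s 0 0 = 0 := by
    simpa [mulVec, dotProduct, hlt, hs1, hs0] using h.mulVec_apply_zero s
  have hdt : U t 1 1 = 0 := by
    simpa [mulVec, dotProduct, hgt, ht0, ht1] using h.mulVec_apply_one t
  refine ⟨s, t, fun hst => hs0 (hst ▸ ht0), has, ?_⟩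
  simpa [hdt] using norm_apply_zero_zero_eq_norm_apply_one_one (hU t)

/-- equivalence of (1) at least two vanishing `aₙ`,
(2) `𝒰` has an `ℓ²`-eigenvalue, (3) `𝒦` has an eigenvalue of modulus one. -/
theorem stmt_1 (n0 : ℕ) (U : ℤ → Matrix (Fin 2) (Fin 2) ℂ)
    (hU : CoinsUnitary U) (hA1 : A1 n0 U) :
    ((∃ n m : ℤ, n ≠ m ∧ U n 0 0 = 0 ∧ U m 0 0 = 0) ↔
      (∃ (μ : ℂ) (ψ : ℤ → C2), ψ ≠ 0 ∧
        Summable (fun n : ℤ => ∑ i : Fin 2, ‖ψ n i‖ ^ 2) ∧ IsSol U μ ψ)) ∧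
    ((∃ (μ : ℂ) (ψ : ℤ → C2), ψ ≠ 0 ∧
        Summable (fun n : ℤ => ∑ i : Fin 2, ‖ψ n i‖ ^ 2) ∧ IsSol U μ ψ) ↔
      ∃ μ : ℂ, ‖μ‖ = 1 ∧ HasEig n0 U μ) := by
  refine ⟨⟨?_, ?_⟩, ⟨?_, ?_⟩⟩
  · rintro ⟨n, m, hnm, han, ham⟩
    wlog hlt : n < m generalizing n m
    · exact this m n hnm.symm ham han (by omega)
    have hdm : U m 1 1 = 0 := by
      simpa [ham] using (norm_apply_zero_zero_eq_norm_apply_one_one (hU m)).symm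
    obtain ⟨μ, ψ, hψ0, hsupp, hsol⟩ := exists_isSol_of_coin_eq_zero hlt han hdm
    exact ⟨μ, ψ, hψ0,
      summable_sum_norm_sq_of_finite_support ((Set.finite_Icc n m).subset hsupp), hsol⟩
  · rintro ⟨μ, ψ, hψ0, hψ, hsol⟩
    have hμ := hsol.norm_eq_one hU hψ0 hψ
    exact hsol.exists_coin_eq_zero hU (norm_ne_zero_iff.mp (by simp [hμ])) hψ0
      ((Set.finite_Icc _ _).subset (hsol.support_subset_Icc hU hA1 hψ0 hψ))
  · rintro ⟨μ, ψ, hψ0, hψ, hsol⟩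
    exact ⟨μ, hsol.norm_eq_one hU hψ0 hψ, hsol.hasEig hU hA1 hψ0 hψ⟩
  · rintro ⟨μ, hμ, v, hv0, hv⟩
    refine ⟨μ, extK n0 v, fun h => hv0 (by rw [← resK_extK v, h]; rfl), ?_, isSol_extK hU hμ hv⟩
    exact summable_sum_norm_sq_of_finite_support
      ((Set.finite_Icc _ _).subset (support_extK_subset v))
end
end

section
/- Assume (A1) and (A2). Then every nonzero eigenvalue λ of 𝒦 satisfies |λ| < 1. Equivalently, 𝕋₂₂(ξ) ≠ 0 for every ξ ∈ ℂ with Im ξ ≥ 0, so the scattering matrix has no pole in the closed upper half strip. -/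
/-!
The truncated operator `𝒦` is the compression of the unitary walk to the sites `0, …, n₀`. For a
solution of `𝒦x = μx`, unitarity of the coins gives the flux identity
`‖x‖² = |(U₀x₀)_L|² + |(U_{n₀}x_{n₀})_R|² + |μ|²‖x‖²`: what `𝒦` loses is the amplitude leaving
through the two ends. If `|μ| ≥ 1` both leaks vanish, and since `a_n ≠ 0` the eigen-equations then
propagate `x = 0` from the left end. If `𝕋₂₂(ξ) = 0`, the vectors `T_k(ξ)⋯T_{n₀}(ξ)|R⟩` yield a
solution of the same equations with `μ = e^{-iξ}` whose right leak is `|μ|² ≠ 0`, which forces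
`|μ| < 1`, i.e. `Im ξ < 0`.
-/

open Complex Matrix

noncomputable section

namespace Matrix

variable {ι : Type*} [Fintype ι] [DecidableEq ι]

theorem sum_normSq_mulVec_of_mem_unitaryGroup {U : Matrix ι ι ℂ} (hU : U ∈ unitaryGroup ι ℂ)
    (x : ι → ℂ) : ∑ i, normSq ((U *ᵥ x) i) = ∑ i, normSq (x i) := by
  have h : star (U *ᵥ x) ⬝ᵥ (U *ᵥ x) = star x ⬝ᵥ x := by
    rw [star_mulVec, dotProduct_mulVec, vecMul_vecMul, ← star_eq_conjTranspose,
      mem_unitaryGroup_iff'.1 hU, vecMul_one]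
  simp only [dotProduct, Pi.star_apply, RCLike.star_def, ← normSq_eq_conj_mul_self] at h
  exact_mod_cast h

theorem eq_zero_of_mulVec_apply_zero {U : Matrix (Fin 2) (Fin 2) ℂ} (ha : U 0 0 ≠ 0)
    {y : Fin 2 → ℂ} (hy : y 1 = 0) (hUy : (U *ᵥ y) 0 = 0) : y = 0 := by
  simp only [mulVec, dotProduct, Fin.sum_univ_two, hy, mul_zero, add_zero, mul_eq_zero,
    ha, false_or] at hUy
  ext i
  fin_cases i <;> assumption

theorem apply_one_one_ne_zero_of_mem_unitaryGroup {U : Matrix (Fin 2) (Fin 2) ℂ}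
    (hU : U ∈ unitaryGroup (Fin 2) ℂ) (ha : U 0 0 ≠ 0) : U 1 1 ≠ 0 := by
  have hcol := congrFun (congrFun (mem_unitaryGroup_iff'.1 hU) 0) 0
  have hrow := congrFun (congrFun (mem_unitaryGroup_iff.1 hU) 1) 1
  simp only [mul_apply, star_apply, RCLike.star_def, ← normSq_eq_conj_mul_self,
    Fin.sum_univ_two, one_apply_eq, mul_conj] at hcol hrow
  rw [← normSq_pos] at ha ⊢
  norm_cast at hcol hrow
  linarith

end Matrix

/-- `𝒦x = μx` on the sites `0, …, n`, written coin by coin; `last` and `first` are its two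
boundary rows divided by `μ ≠ 0`. -/
structure IsTruncatedSol (U : ℕ → Matrix (Fin 2) (Fin 2) ℂ) (n : ℕ) (μ : ℂ) (x : ℕ → C2) :
    Prop where
  left : ∀ k < n, (U (k + 1) *ᵥ x (k + 1)) 0 = μ * x k 0
  right : ∀ k < n, (U k *ᵥ x k) 1 = μ * x (k + 1) 1
  last : x n 0 = 0
  first : x 0 1 = 0

namespace IsTruncatedSol

variable {U : ℕ → Matrix (Fin 2) (Fin 2) ℂ} {n : ℕ} {μ : ℂ} {x : ℕ → C2}

theorem energy_eq (h : IsTruncatedSol U n μ x) (hU : ∀ k, U k ∈ unitaryGroup (Fin 2) ℂ) :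
    ∑ k ∈ Finset.range (n + 1), ∑ i, normSq (x k i) =
      normSq ((U 0 *ᵥ x 0) 0) + normSq ((U n *ᵥ x n) 1) +
        normSq μ * ∑ k ∈ Finset.range (n + 1), ∑ i, normSq (x k i) := by
  have hleft : ∑ k ∈ Finset.range (n + 1), normSq ((U k *ᵥ x k) 0) =
      normSq ((U 0 *ᵥ x 0) 0) + normSq μ * ∑ k ∈ Finset.range (n + 1), normSq (x k 0) := by
    rw [Finset.sum_range_succ', Finset.sum_range_succ _ n, h.last, map_zero, add_zero, add_comm,
      Finset.mul_sum]
    exact congrArg _ (Finset.sum_congr rfl fun k hk => by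
      rw [h.left k (Finset.mem_range.1 hk), normSq_mul])
  have hright : ∑ k ∈ Finset.range (n + 1), normSq ((U k *ᵥ x k) 1) =
      normSq ((U n *ᵥ x n) 1) + normSq μ * ∑ k ∈ Finset.range (n + 1), normSq (x k 1) := by
    rw [Finset.sum_range_succ, Finset.sum_range_succ' _ n, h.first, map_zero, add_zero, add_comm,
      Finset.mul_sum]
    exact congrArg _ (Finset.sum_congr rfl fun k hk => by
      rw [h.right k (Finset.mem_range.1 hk), normSq_mul])
  calc ∑ k ∈ Finset.range (n + 1), ∑ i, normSq (x k i)
      = ∑ k ∈ Finset.range (n + 1), ∑ i, normSq ((U k *ᵥ x k) i) :=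
        Finset.sum_congr rfl fun k _ => (sum_normSq_mulVec_of_mem_unitaryGroup (hU k) _).symm
    _ = _ := by
        simp only [Fin.sum_univ_two, Finset.sum_add_distrib, hleft, hright]
        ring

theorem boundary_eq_zero_of_one_le_normSq (h : IsTruncatedSol U n μ x)
    (hU : ∀ k, U k ∈ unitaryGroup (Fin 2) ℂ) (hμ : 1 ≤ normSq μ) :
    (U 0 *ᵥ x 0) 0 = 0 ∧ (U n *ᵥ x n) 1 = 0 := by
  have hE := h.energy_eq hU
  have hS : 0 ≤ ∑ k ∈ Finset.range (n + 1), ∑ i, normSq (x k i) :=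
    Finset.sum_nonneg fun k _ => Finset.sum_nonneg fun i _ => normSq_nonneg _
  have h0 := normSq_nonneg ((U 0 *ᵥ x 0) 0)
  have h1 := normSq_nonneg ((U n *ᵥ x n) 1)
  constructor <;> rw [← normSq_eq_zero] <;> nlinarith

theorem eq_zero (h : IsTruncatedSol U n μ x) (ha : ∀ k, U k 0 0 ≠ 0) (hμ : μ ≠ 0)
    (h0 : (U 0 *ᵥ x 0) 0 = 0) : ∀ k ≤ n, x k = 0 := by
  intro k
  induction k with
  | zero => exact fun _ => eq_zero_of_mulVec_apply_zero (ha 0) h.first h0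
  | succ k ih =>
    intro hk
    have hxk := ih (by omega)
    have hright : μ * x (k + 1) 1 = 0 := by
      rw [← h.right k hk, hxk, mulVec_zero, Pi.zero_apply]
    refine eq_zero_of_mulVec_apply_zero (ha (k + 1)) ((mul_eq_zero.1 hright).resolve_left hμ) ?_
    rw [h.left k hk, hxk, Pi.zero_apply, mul_zero]

end IsTruncatedSol

def toSeq {n0 : ℕ} (v : Fin (n0 + 1) × Fin 2 → ℂ) : ℕ → C2 :=
  fun k i => if h : k < n0 + 1 then v (⟨k, h⟩, i) else 0

section Kmat

variable {n0 : ℕ} (U : ℤ → Matrix (Fin 2) (Fin 2) ℂ) (v : Fin (n0 + 1) × Fin 2 → ℂ)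

theorem toSeq_val (m : Fin (n0 + 1)) (i : Fin 2) : toSeq v m i = v (m, i) :=
  dif_pos m.isLt

theorem toSeq_eq_zero_of_lt {k : ℕ} (hk : n0 < k) : toSeq v k = 0 := by
  funext i
  exact dif_neg (by omega)

theorem Kmat_mulVec_apply_left (m : Fin (n0 + 1)) :
    (Kmat n0 U *ᵥ v) (m, 0) = (U ((m : ℤ) + 1) *ᵥ toSeq v (m + 1)) 0 := by
  have : (Kmat n0 U *ᵥ v) (m, 0) = ∑ q : Fin (n0 + 1),
      if (q : ℕ) = m + 1 then (U ((m : ℤ) + 1) *ᵥ toSeq v q) 0 else 0 := by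
    simp [mulVec, dotProduct, Kmat, Fintype.sum_prod_type, Fin.sum_univ_two, toSeq_val]
  rw [this, Fin.sum_univ_eq_sum_range
    (fun k => if k = m + 1 then (U ((m : ℤ) + 1) *ᵥ toSeq v k) 0 else 0), Finset.sum_ite_eq']
  split_ifs with h
  · rfl
  · rw [toSeq_eq_zero_of_lt v (by simpa using h), mulVec_zero, Pi.zero_apply]

theorem Kmat_mulVec_apply_succ_right (k : ℕ) (hk : k + 1 < n0 + 1) :
    (Kmat n0 U *ᵥ v) (⟨k + 1, hk⟩, 1) = (U k *ᵥ toSeq v k) 1 := by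
  have : (Kmat n0 U *ᵥ v) (⟨k + 1, hk⟩, 1) = ∑ q : Fin (n0 + 1),
      if (q : ℕ) = k then (U q *ᵥ toSeq v q) 1 else 0 := by
    simp [mulVec, dotProduct, Kmat, Fintype.sum_prod_type, Fin.sum_univ_two, toSeq_val]
  rw [this, Fin.sum_univ_eq_sum_range (fun j => if j = k then (U j *ᵥ toSeq v j) 1 else 0),
    Finset.sum_ite_eq', if_pos (Finset.mem_range.2 (by omega))]

theorem Kmat_mulVec_apply_zero_right : (Kmat n0 U *ᵥ v) (0, 1) = 0 := by
  simp [mulVec, dotProduct, Kmat]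

end Kmat

theorem isTruncatedSol_toSeq {n0 : ℕ} {U : ℤ → Matrix (Fin 2) (Fin 2) ℂ}
    {v : Fin (n0 + 1) × Fin 2 → ℂ} {μ : ℂ} (hμ : μ ≠ 0) (hKv : Kmat n0 U *ᵥ v = μ • v) :
    IsTruncatedSol (fun k : ℕ => U k) n0 μ (toSeq v) := by
  have hK : ∀ p, (Kmat n0 U *ᵥ v) p = μ * v p := fun p => by rw [hKv]; rfl
  refine ⟨fun k hk => ?_, fun k hk => ?_, ?_, ?_⟩
  · have := hK (⟨k, by omega⟩, 0)
    rw [Kmat_mulVec_apply_left, ← toSeq_val v] at this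
    simpa using this
  · have := hK (⟨k + 1, by omega⟩, 1)
    rwa [Kmat_mulVec_apply_succ_right, ← toSeq_val v] at this
  · have := hK (Fin.last n0, 0)
    rw [Kmat_mulVec_apply_left, toSeq_eq_zero_of_lt v (by simp), mulVec_zero, Pi.zero_apply,
      eq_comm, mul_eq_zero, ← toSeq_val v] at this
    exact this.resolve_left hμ
  · have := hK (0, 1)
    rw [Kmat_mulVec_apply_zero_right, eq_comm, mul_eq_zero, ← toSeq_val v] at this
    exact this.resolve_left hμ

theorem norm_lt_one_of_hasEig {n0 : ℕ} {U : ℤ → Matrix (Fin 2) (Fin 2) ℂ} (hU : CoinsUnitary U)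
    (hA2 : A2 U) {μ : ℂ} (hμ : μ ≠ 0) (h : HasEig n0 U μ) : ‖μ‖ < 1 := by
  obtain ⟨v, hv, hKv⟩ := h
  have hsol := isTruncatedSol_toSeq hμ hKv
  by_contra! hge
  have hin := (hsol.boundary_eq_zero_of_one_le_normSq (fun k => hU k)
    (by rw [normSq_eq_norm_sq]; exact one_le_pow₀ hge)).1
  have hx := hsol.eq_zero (fun k => hA2 k) hμ hin
  exact hv (funext fun ⟨m, i⟩ => by rw [← toSeq_val v, hx m (Nat.lt_succ_iff.1 m.isLt)]; rfl)

/-- The transfer matrix propagates a solution of `𝒰ψ = e^{-iξ}ψ` across coin `n` to the left. -/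
theorem mulVec_Tmat (U : ℤ → Matrix (Fin 2) (Fin 2) ℂ) (ξ : ℂ) (n : ℤ)
    (hU : U n ∈ unitaryGroup (Fin 2) ℂ) (ha : U n 0 0 ≠ 0) (x : C2) :
    U n *ᵥ ![x 0, (Tmat U ξ n *ᵥ x) 1] = cexp (-(I * ξ)) • ![(Tmat U ξ n *ᵥ x) 0, x 1] := by
  have hd := apply_one_one_ne_zero_of_mem_unitaryGroup hU ha
  have ha' : (starRingEnd ℂ) (U n 0 0) ≠ 0 := (map_ne_zero _).2 ha
  have hcol := congrFun (congrFun (mem_unitaryGroup_iff'.1 hU) 0) 0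
  have horth := congrFun (congrFun (mem_unitaryGroup_iff'.1 hU) 0) 1
  simp only [mul_apply, star_apply, RCLike.star_def, Fin.sum_univ_two, one_apply_eq,
    one_apply_ne (by decide : (0 : Fin 2) ≠ 1)] at hcol horth
  have hexp : cexp (-(I * ξ)) * cexp (I * ξ) = 1 := by rw [← Complex.exp_add]; simp
  ext i
  fin_cases i <;>
    simp only [mulVec, dotProduct, Tmat, of_apply, cons_val', cons_val_fin_one, cons_val_zero,
      cons_val_one, Fin.sum_univ_two, Fin.zero_eta, Fin.mk_one, Pi.smul_apply, smul_eq_mul] <;>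
    field_simp
  · linear_combination (x 0 * U n 1 1) * hcol - (U n 1 1 * x 0) * hexp +
      (cexp (-(I * ξ)) * x 1 - x 0 * U n 1 0) * horth
  · ring

def tailTT (n0 : ℕ) (U : ℤ → Matrix (Fin 2) (Fin 2) ℂ) (ξ : ℂ) (k : ℕ) :
    Matrix (Fin 2) (Fin 2) ℂ :=
  ((List.range' k (n0 + 1 - k)).map fun j : ℕ => Tmat U ξ (j : ℤ)).prod

section tailTT

variable (n0 : ℕ) (U : ℤ → Matrix (Fin 2) (Fin 2) ℂ) (ξ : ℂ)

theorem tailTT_zero : tailTT n0 U ξ 0 = TT n0 U ξ := by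
  simp only [tailTT, TT, Nat.sub_zero, List.range_eq_range', List.pure_def, List.bind_eq_flatMap,
    ← List.map_eq_flatMap, List.map_map, Function.comp_def]

theorem tailTT_of_le {k : ℕ} (hk : k ≤ n0) :
    tailTT n0 U ξ k = Tmat U ξ k * tailTT n0 U ξ (k + 1) := by
  rw [tailTT, tailTT, show n0 + 1 - k = n0 - k + 1 by omega, List.range'_succ, List.map_cons,
    List.prod_cons, show n0 + 1 - (k + 1) = n0 - k by omega]

theorem tailTT_succ_self : tailTT n0 U ξ (n0 + 1) = 1 := by
  simp [tailTT]

end tailTT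

theorem one_le_normSq_exp_neg_I_mul {ξ : ℂ} (hξ : 0 ≤ ξ.im) : 1 ≤ normSq (cexp (-(I * ξ))) := by
  rw [normSq_eq_norm_sq, Complex.norm_exp]
  apply one_le_pow₀
  simpa using hξ

theorem TT_one_one_ne_zero {n0 : ℕ} {U : ℤ → Matrix (Fin 2) (Fin 2) ℂ} (hU : CoinsUnitary U)
    (hA2 : A2 U) {ξ : ℂ} (hξ : 0 ≤ ξ.im) : TT n0 U ξ 1 1 ≠ 0 := by
  intro hT
  set μ := cexp (-(I * ξ))
  set F : ℕ → C2 := fun k => tailTT n0 U ξ k *ᵥ ![0, 1]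
  have hstep : ∀ k ≤ n0, U k *ᵥ ![F (k + 1) 0, F k 1] = μ • ![F k 0, F (k + 1) 1] := by
    intro k hk
    have := mulVec_Tmat U ξ k (hU k) (hA2 k) (F (k + 1))
    rwa [mulVec_mulVec, ← tailTT_of_le n0 U ξ hk] at this
  have hsol : IsTruncatedSol (fun k : ℕ => U k) n0 μ fun k => ![F (k + 1) 0, F k 1] :=
    { left := fun k hk => by simpa using congrFun (hstep (k + 1) hk) 0
      right := fun k hk => by simpa using congrFun (hstep k hk.le) 1
      last := by simp [F, tailTT_succ_self]
      first := by simpa [F, tailTT_zero, mulVec, dotProduct] using hT }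
  have hout := (hsol.boundary_eq_zero_of_one_le_normSq (fun k => hU k)
    (one_le_normSq_exp_neg_I_mul hξ)).2
  rw [hstep n0 le_rfl] at hout
  simp [F, tailTT_succ_self, μ] at hout

theorem stmt_6_general (n0 : ℕ) (U : ℤ → Matrix (Fin 2) (Fin 2) ℂ)
    (hU : CoinsUnitary U) (hA2 : A2 U) :
    (∀ μ : ℂ, μ ≠ 0 → HasEig n0 U μ → ‖μ‖ < 1) ∧
    ∀ ξ : ℂ, 0 ≤ ξ.im → TT n0 U ξ 1 1 ≠ 0 :=
  ⟨fun _ hμ => norm_lt_one_of_hasEig hU hA2 hμ, fun _ hξ => TT_one_one_ne_zero hU hA2 hξ⟩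

/-- nonzero eigenvalues of `𝒦` have modulus `< 1`; equivalently
`𝕋₂₂(ξ) ≠ 0` whenever `Im ξ ≥ 0`. -/
theorem stmt_6 (n0 : ℕ) (U : ℤ → Matrix (Fin 2) (Fin 2) ℂ)
    (hU : CoinsUnitary U) (hA1 : A1 n0 U) (hA2 : A2 U) :
    (∀ μ : ℂ, μ ≠ 0 → HasEig n0 U μ → ‖μ‖ < 1) ∧
    ∀ ξ : ℂ, 0 ≤ ξ.im → TT n0 U ξ 1 1 ≠ 0 :=
  stmt_6_general n0 U hU hA2
end
end

section
/- Assume (A1) and (A2). For every nonzero eigenvalue λ of 𝒦, the eigenspace ker(𝒦 − λI) is one-dimensional; equivalently, for every ξ ∈ ℂ such that e^{−iξ} is an eigenvalue of 𝒦, the space of outgoing solutions of 𝒰ψ = e^{−iξ}ψ is one-dimensional. (The geometric multiplicity of each resonance is one.) -/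
open Complex Matrix

noncomputable section

/-!
The walk is a coin step followed by a shift, so `𝒰ψ = μψ` decouples into the site equations
`U_m ψ(m) = μ (⟨L|ψ(m-1)⟩, ⟨R|ψ(m+1)⟩)`. Because `a_m, d_m, μ ≠ 0`, a solution vanishing at one
site vanishes at its neighbours, hence everywhere; an outgoing solution has `⟨R|ψ(0)⟩ = 0`, so it
is determined by the single number `⟨L|ψ(0)⟩`. An eigenvector `v` of `𝒦` extends to an outgoing
solution equal to `v` on `[n₀]`, continued by the free outgoing waves `μ^n |L⟩` on the left and
`μ^{n₀-n} |R⟩` on the right. So eigenvectors too are determined by `⟨L|v(0)⟩`, and both spaces are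
one-dimensional.
-/

lemma Matrix.apply_one_one_ne_zero_of_mem_unitaryGroup_s8 {𝕜 : Type*} [RCLike 𝕜]
    {V : Matrix (Fin 2) (Fin 2) 𝕜} (hV : V ∈ unitaryGroup (Fin 2) 𝕜) (h : V 0 0 ≠ 0) :
    V 1 1 ≠ 0 := by
  intro hd
  -- rows 0 and 1 are orthogonal, so `d = 0` forces `c = 0`, and then row 1 has norm `0`
  have hVV : V * star V = 1 := mem_unitaryGroup_iff.mp hV
  have hc : V 1 0 = 0 := by
    simpa [mul_apply, Fin.sum_univ_two, hd, h] using congrFun (congrFun hVV 0) 1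
  simpa [mul_apply, Fin.sum_univ_two, hc, hd] using congrFun (congrFun hVV 1) 1

lemma Fin.sum_ite_val_eq {M : Type*} [AddCommMonoid M] {n : ℕ} (j : ℕ) (f : ℕ → M) :
    (∑ x : Fin n, if (x : ℕ) = j then f x else 0) = if j < n then f j else 0 := by
  rw [Fin.sum_univ_eq_sum_range (fun x => if x = j then f x else 0), Finset.sum_ite_eq']
  exact if_congr Finset.mem_range rfl rfl

lemma Submodule.finrank_eq_one_of_eval_eq_zero {K ι : Type*} [Field K] (S : Submodule K (ι → K))
    (i : ι) (hS : S ≠ ⊥) (h : ∀ v ∈ S, v i = 0 → v = 0) : Module.finrank K S = 1 := by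
  have hinj : Function.Injective (LinearMap.proj i ∘ₗ S.subtype) := by
    rw [← LinearMap.ker_eq_bot, LinearMap.ker_eq_bot']
    exact fun v hv => Subtype.ext (h v v.2 hv)
  have : Module.Finite K S := Module.Finite.of_injective _ hinj
  have hle := LinearMap.finrank_le_finrank_of_injective hinj
  have hpos : Module.finrank K S ≠ 0 := Submodule.finrank_eq_zero.not.2 hS
  rw [Module.finrank_self] at hle
  omega

lemma Matrix.mem_ker_mulVecLin_sub_smul_one_iff {R ι : Type*} [CommRing R] [Fintype ι]
    [DecidableEq ι] (A : Matrix ι ι R) (μ : R) (w : ι → R) :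
    w ∈ LinearMap.ker (mulVecLin (A - μ • 1)) ↔ A *ᵥ w = μ • w := by
  rw [LinearMap.mem_ker, mulVecLin_apply, sub_mulVec, smul_mulVec, one_mulVec, sub_eq_zero]

section Solutions

variable {n0 : ℕ} {U : ℤ → Matrix (Fin 2) (Fin 2) ℂ} {μ : ℂ} {ψ φ : ℤ → C2}

lemma QWop_apply (ψ : ℤ → C2) (n : ℤ) :
    QWop U ψ n = ![(U (n + 1) *ᵥ ψ (n + 1)) 0, (U (n - 1) *ᵥ ψ (n - 1)) 1] := by
  ext i; fin_cases i <;> simp [QWop, Pmat, Qmat, mulVec, dotProduct, Fin.sum_univ_two]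

lemma isSol_iff : IsSol U μ ψ ↔ ∀ m, U m *ᵥ ψ m = μ • ![ψ (m - 1) 0, ψ (m + 1) 1] := by
  simp only [IsSol, QWop_apply, funext_iff, Fin.forall_fin_two]
  constructor
  · exact fun h m => ⟨by simpa using (h (m - 1)).1, by simpa using (h (m + 1)).2⟩
  · exact fun h n => ⟨by simpa using (h (n + 1)).1, by simpa using (h (n - 1)).2⟩

lemma IsSol.sub_smul (hψ : IsSol U μ ψ) (hφ : IsSol U μ φ) (c : ℂ) :
    IsSol U μ (ψ - c • φ) := by
  intro n
  have hψn := hψ n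
  have hφn := hφ n
  simp only [QWop, Pi.sub_apply, Pi.smul_apply, mulVec_sub, mulVec_smul] at hψn hφn ⊢
  linear_combination (norm := module) hψn - c • hφn

lemma IsSol.eq_zero_of_apply_eq_zero (hU : CoinsUnitary U) (hA2 : A2 U) (hμ : μ ≠ 0)
    (h : IsSol U μ ψ) {m : ℤ} (hm : ψ m = 0) : ψ = 0 := by
  have hsite := isSol_iff.1 h
  have hd : ∀ k, U k 1 1 ≠ 0 := fun k => apply_one_one_ne_zero_of_mem_unitaryGroup_s8 (hU k) (hA2 k)
  have succ (k : ℤ) (hk : ψ k = 0) : ψ (k + 1) = 0 := by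
    have hR : ψ (k + 1) 1 = 0 := by
      simpa [hk, hμ] using congrFun (hsite k) 1
    have hL : ψ (k + 1) 0 = 0 := by
      simpa [hk, hR, hA2 (k + 1), mulVec, dotProduct, Fin.sum_univ_two]
        using congrFun (hsite (k + 1)) 0
    ext i; fin_cases i
    exacts [hL, hR]
  have pred (k : ℤ) (hk : ψ k = 0) : ψ (k - 1) = 0 := by
    have hL : ψ (k - 1) 0 = 0 := by
      simpa [hk, hμ] using congrFun (hsite k) 0
    have hR : ψ (k - 1) 1 = 0 := by
      simpa [hk, hL, hd (k - 1), mulVec, dotProduct, Fin.sum_univ_two]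
        using congrFun (hsite (k - 1)) 1
    ext i; fin_cases i
    exacts [hL, hR]
  funext n
  induction n using Int.inductionOn' (b := m) with
  | zero => exact hm
  | succ k _ ih => exact succ k ih
  | pred k _ ih => exact pred k ih

lemma Outgoing.apply_zero_one (h : Outgoing n0 ψ) : ψ 0 1 = 0 := by
  simpa using (h 0).1

lemma Outgoing.eq_smul_of_isSol (hU : CoinsUnitary U) (hA2 : A2 U) (hμ : μ ≠ 0)
    (hψ : Outgoing n0 ψ) (hψs : IsSol U μ ψ) (hφ : Outgoing n0 φ) (hφs : IsSol U μ φ)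
    (hφ0 : φ 0 0 ≠ 0) : ψ = (ψ 0 0 / φ 0 0) • φ := by
  refine sub_eq_zero.1 <|
    IsSol.eq_zero_of_apply_eq_zero hU hA2 hμ (IsSol.sub_smul hψs hφs _) (m := 0) ?_
  ext i; fin_cases i
  · simp [div_mul_cancel₀ _ hφ0]
  · simp [Outgoing.apply_zero_one hψ, Outgoing.apply_zero_one hφ]

end Solutions

section Truncation

variable {n0 : ℕ} {U : ℤ → Matrix (Fin 2) (Fin 2) ℂ}

def zeroExt (n0 : ℕ) (v : Fin (n0 + 1) × Fin 2 → ℂ) : ℤ → C2 := fun n i =>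
  if h : 0 ≤ n ∧ n ≤ n0 then v (⟨n.toNat, by omega⟩, i) else 0

lemma zeroExt_natCast (v : Fin (n0 + 1) × Fin 2 → ℂ) (k : Fin (n0 + 1)) (i : Fin 2) :
    zeroExt n0 v (k : ℕ) i = v (k, i) := by
  simp [zeroExt, k.is_le]

lemma zeroExt_eq_zero (v : Fin (n0 + 1) × Fin 2 → ℂ) {n : ℤ} (hn : n < 0 ∨ (n0 : ℤ) < n) :
    zeroExt n0 v n = 0 := by
  ext i; simp only [zeroExt]; rw [dif_neg (by omega)]; rfl

lemma Kmat_mulVec_apply (v : Fin (n0 + 1) × Fin 2 → ℂ) (k : Fin (n0 + 1)) (i : Fin 2) :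
    (Kmat n0 U *ᵥ v) (k, i) = QWop U (zeroExt n0 v) k i := by
  have hk := k.is_le
  fin_cases i <;>
    simp only [QWop_apply, mulVec, dotProduct, Fintype.sum_prod_type, Kmat, of_apply,
      ← zeroExt_natCast v, Fin.zero_eta, Fin.mk_one]
  · simp only [true_and, zero_ne_one, false_and, if_false, add_zero, ite_mul, zero_mul,
      Finset.sum_ite_irrel, Fin.sum_univ_two, Finset.sum_const_zero, cons_val_zero]
    rw [Fin.sum_ite_val_eq ((k : ℕ) + 1) fun j => U ((k : ℕ) + 1 : ℤ) 0 0 * zeroExt n0 v j 0 +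
      U ((k : ℕ) + 1 : ℤ) 0 1 * zeroExt n0 v j 1]
    split_ifs with h
    · push_cast; rfl
    · rw [zeroExt_eq_zero v (n := (k : ℕ) + 1) (by omega)]; simp
  · simp only [true_and, one_ne_zero, false_and, if_false, zero_add, ite_mul, zero_mul,
      Finset.sum_ite_irrel, Fin.sum_univ_two, Finset.sum_const_zero, cons_val_one, cons_val_fin_one]
    rcases hk' : (k : ℕ) with _ | k'
    · simp [zeroExt_eq_zero v (n := -1) (by omega)]
    · simp only [Nat.add_right_cancel_iff]
      rw [Fin.sum_ite_val_eq k' fun j => U (j : ℤ) 1 0 * zeroExt n0 v j 0 +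
        U (j : ℤ) 1 1 * zeroExt n0 v j 1, if_pos (by omega)]
      push_cast
      simp

end Truncation

section Extension

variable {n0 : ℕ} {U : ℤ → Matrix (Fin 2) (Fin 2) ℂ} {μ : ℂ} {w : ℤ → C2}

/-- A state supported on `[n₀]` whose restriction to `[n₀]` is a `μ`-eigenvector of `𝒦`. -/
def IsTruncatedSol_s8 (n0 : ℕ) (U : ℤ → Matrix (Fin 2) (Fin 2) ℂ) (μ : ℂ) (w : ℤ → C2) : Prop :=
  (∀ n : ℤ, n < 0 ∨ (n0 : ℤ) < n → w n = 0) ∧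
    ∀ n : ℤ, 0 ≤ n → n ≤ n0 → QWop U w n = μ • w n

lemma isTruncatedSol_zeroExt {v : Fin (n0 + 1) × Fin 2 → ℂ} (hK : Kmat n0 U *ᵥ v = μ • v) :
    IsTruncatedSol_s8 n0 U μ (zeroExt n0 v) := by
  refine ⟨fun n hn => zeroExt_eq_zero v hn, fun n hn0 hn1 => ?_⟩
  lift n to ℕ using hn0
  ext i
  have := congrFun hK (⟨n, by omega⟩, i)
  rwa [Kmat_mulVec_apply, Pi.smul_apply, ← zeroExt_natCast v] at this

lemma IsTruncatedSol_s8.apply_zero_one (h : IsTruncatedSol_s8 n0 U μ w) (hμ : μ ≠ 0) : w 0 1 = 0 := by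
  simpa [QWop_apply, h.1 (-1) (by omega), hμ] using congrFun (h.2 0 le_rfl (by positivity)) 1

lemma IsTruncatedSol_s8.apply_n0_zero (h : IsTruncatedSol_s8 n0 U μ w) (hμ : μ ≠ 0) : w n0 0 = 0 := by
  simpa [QWop_apply, h.1 (n0 + 1) (by omega), hμ] using congrFun (h.2 n0 (by positivity) le_rfl) 0

/-- The tail amplitudes make the site equations at `0` and `n₀` hold. -/
def outgoingExt (n0 : ℕ) (U : ℤ → Matrix (Fin 2) (Fin 2) ℂ) (μ : ℂ) (w : ℤ → C2) : ℤ → C2 :=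
  fun n =>
    if n < 0 then ![μ ^ n * (U 0 *ᵥ w 0) 0, 0]
    else if (n0 : ℤ) < n then ![0, μ ^ ((n0 : ℤ) - n) * (U n0 *ᵥ w n0) 1]
    else w n

lemma outgoingExt_of_neg {n : ℤ} (hn : n < 0) :
    outgoingExt n0 U μ w n = ![μ ^ n * (U 0 *ᵥ w 0) 0, 0] := if_pos hn

lemma outgoingExt_of_lt {n : ℤ} (hn : (n0 : ℤ) < n) :
    outgoingExt n0 U μ w n = ![0, μ ^ ((n0 : ℤ) - n) * (U n0 *ᵥ w n0) 1] := by
  rw [outgoingExt, if_neg (by omega), if_pos hn]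

lemma outgoingExt_of_mem {n : ℤ} (h0 : 0 ≤ n) (h1 : n ≤ n0) : outgoingExt n0 U μ w n = w n := by
  rw [outgoingExt, if_neg (by omega), if_neg (by omega)]

lemma IsTruncatedSol_s8.outgoing_outgoingExt (h : IsTruncatedSol_s8 n0 U μ w) (hμ : μ ≠ 0) :
    Outgoing n0 (outgoingExt n0 U μ w) := by
  intro n
  rcases Nat.eq_zero_or_pos n with rfl | hn
  · simp [outgoingExt_of_mem, h.apply_zero_one hμ, h.apply_n0_zero hμ]
  · simp [outgoingExt_of_neg (show -(n : ℤ) < 0 by omega),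
      outgoingExt_of_lt (show (n0 : ℤ) < n0 + n by omega)]

lemma IsTruncatedSol_s8.isSol_outgoingExt (h : IsTruncatedSol_s8 n0 U μ w) (hA1 : A1 n0 U)
    (hμ : μ ≠ 0) : IsSol U μ (outgoingExt n0 U μ w) := by
  have hstep (k : ℤ) : μ * μ ^ (k - 1) = μ ^ k := by rw [← zpow_one_add₀ hμ, add_sub_cancel]
  rw [isSol_iff]
  intro m
  rcases lt_or_ge m 0 with hm | hm0
  · have hR : outgoingExt n0 U μ w (m + 1) 1 = 0 := by
      rcases (show m + 1 < 0 ∨ m + 1 = 0 by omega) with h' | h'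
      · simp [outgoingExt_of_neg h']
      · simp [h', outgoingExt_of_mem, h.apply_zero_one hμ]
    rw [hA1 m (Or.inl hm), one_mulVec, hR, outgoingExt_of_neg hm,
      outgoingExt_of_neg (n := m - 1) (by omega)]
    ext i; fin_cases i <;> simp [← hstep m, mul_assoc]
  rcases lt_or_ge (n0 : ℤ) m with hm | hm1
  · have hL : outgoingExt n0 U μ w (m - 1) 0 = 0 := by
      rcases (show (n0 : ℤ) < m - 1 ∨ m - 1 = n0 by omega) with h' | h'
      · simp [outgoingExt_of_lt h']
      · simp [h', outgoingExt_of_mem, h.apply_n0_zero hμ]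
    rw [hA1 m (Or.inr hm), one_mulVec, hL, outgoingExt_of_lt hm,
      outgoingExt_of_lt (n := m + 1) (by omega),
      show (n0 : ℤ) - (m + 1) = n0 - m - 1 by ring]
    ext i; fin_cases i <;> simp [← hstep (n0 - m), mul_assoc]
  rw [outgoingExt_of_mem hm0 hm1]
  ext i; fin_cases i
  · rcases eq_or_lt_of_le hm0 with rfl | hm0
    · simp [outgoingExt_of_neg, hμ]
    · simpa [QWop_apply, outgoingExt_of_mem (by omega : 0 ≤ m - 1) (by omega : m - 1 ≤ n0)]
        using congrFun (h.2 (m - 1) (by omega) (by omega)) 0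
  · rcases eq_or_lt_of_le hm1 with rfl | hm1
    · simp [outgoingExt_of_lt, hμ]
    · simpa [QWop_apply, outgoingExt_of_mem (by omega : 0 ≤ m + 1) (by omega : m + 1 ≤ n0)]
        using congrFun (h.2 (m + 1) (by omega) (by omega)) 1

end Extension

section Eigenvectors

variable {n0 : ℕ} {U : ℤ → Matrix (Fin 2) (Fin 2) ℂ} {μ : ℂ} {v : Fin (n0 + 1) × Fin 2 → ℂ}

lemma exists_outgoing_isSol_resK_eq (hA1 : A1 n0 U) (hμ : μ ≠ 0)
    (hK : Kmat n0 U *ᵥ v = μ • v) :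
    ∃ φ : ℤ → C2, Outgoing n0 φ ∧ IsSol U μ φ ∧ resK n0 φ = v := by
  have hw := isTruncatedSol_zeroExt hK
  refine ⟨_, hw.outgoing_outgoingExt hμ, hw.isSol_outgoingExt hA1 hμ, ?_⟩
  ext ⟨k, i⟩
  rw [resK, outgoingExt_of_mem (by positivity) (by exact_mod_cast k.is_le), zeroExt_natCast]

lemma eq_zero_of_mulVec_Kmat_eq_smul (hU : CoinsUnitary U) (hA1 : A1 n0 U) (hA2 : A2 U)
    (hμ : μ ≠ 0) (hK : Kmat n0 U *ᵥ v = μ • v) (h00 : v (0, 0) = 0) : v = 0 := by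
  obtain ⟨φ, hout, hsol, rfl⟩ := exists_outgoing_isSol_resK_eq hA1 hμ hK
  have hφ0 : φ 0 = 0 := by
    ext i; fin_cases i
    · simpa [resK] using h00
    · exact Outgoing.apply_zero_one hout
  rw [IsSol.eq_zero_of_apply_eq_zero hU hA2 hμ hsol hφ0]
  rfl

end Eigenvectors

/-- the geometric multiplicity of each resonance is one. -/
theorem stmt_8 (n0 : ℕ) (U : ℤ → Matrix (Fin 2) (Fin 2) ℂ)
    (hU : CoinsUnitary U) (hA1 : A1 n0 U) (hA2 : A2 U) :
    ∀ μ : ℂ, μ ≠ 0 → HasEig n0 U μ →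
      Module.finrank ℂ (LinearMap.ker (Matrix.mulVecLin (Kmat n0 U - μ • 1))) = 1 ∧
      ∃ φ : ℤ → C2, φ ≠ 0 ∧ Outgoing n0 φ ∧ IsSol U μ φ ∧
        ∀ ψ : ℤ → C2, Outgoing n0 ψ → IsSol U μ ψ → ∃ c : ℂ, ψ = c • φ := by
  rintro μ hμ ⟨v, hv, hKv⟩
  have eigen_eq_zero (w) (hw : w ∈ LinearMap.ker (mulVecLin (Kmat n0 U - μ • 1)))
      (hw0 : w (0, 0) = 0) : w = 0 :=
    eq_zero_of_mulVec_Kmat_eq_smul hU hA1 hA2 hμ ((mem_ker_mulVecLin_sub_smul_one_iff ..).1 hw) hw0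
  have hv_mem := (mem_ker_mulVecLin_sub_smul_one_iff _ _ v).2 hKv
  obtain ⟨φ, hφout, hφsol, rfl⟩ := exists_outgoing_isSol_resK_eq hA1 hμ hKv
  have hφ0 : φ 0 0 ≠ 0 := fun h => hv (eigen_eq_zero _ hv_mem (by simpa [resK] using h))
  refine ⟨Submodule.finrank_eq_one_of_eval_eq_zero _ (0, 0) ?_ eigen_eq_zero,
    φ, fun h => hφ0 (by simp [h]), hφout, hφsol,
    fun ψ hψ hψs => ⟨_, Outgoing.eq_smul_of_isSol hU hA2 hμ hψ hψs hφout hφsol hφ0⟩⟩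
  exact (Submodule.ne_bot_iff _).2 ⟨_, hv_mem, hv⟩
end
end
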